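/- Let X be a length space and Λ(X) the group of ρ-loops at the basepoint * under cancelled concatenation. Then Λ(X) acts freely by isometries on the space X̄ of ρ-paths at * via left cancelled concatenation: k·c := k⋆c, and d(k⋆c₁, k⋆c₂) = d(c₁,c₂) for all k ∈ Λ(X) and c₁,c₂ ∈ X̄. -/

import Mathlib

open Set

/-- An arclength-parameterized weakly normal rectifiable path (ρ-path) in a metric
space `X`.  The path is defined on `[0, len]`, extended constantly outside. -/
structure RPath (X : Type*) [MetricSpace X] where
  /-- the length of the path -/
  len : ℝ
  len_nonneg : 0 ≤ len
  toFun : ℝ → X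
  contOn : ContinuousOn toFun (Icc 0 len)
  /-- arclength parameterization: the length of the restriction to `[s,t]` is `t - s`. -/
  arclength : ∀ s t : ℝ, 0 ≤ s → s ≤ t → t ≤ len →
    eVariationOn toFun (Icc s t) = ENNReal.ofReal (t - s)
  clamp_left : ∀ t : ℝ, t ≤ 0 → toFun t = toFun 0
  clamp_right : ∀ t : ℝ, len ≤ t → toFun t = toFun len
  /-- weak normality: no nontrivial subsegment `[u,v]` with equal endpoints is
  null-homotopic in its own image rel endpoints. -/
  weaklyNormal : ¬ ∃ u v : ℝ, 0 ≤ u ∧ u < v ∧ v ≤ len ∧ toFun u = toFun v ∧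
    ∃ H : ℝ × ℝ → X, ContinuousOn H (Icc u v ×ˢ Icc 0 1) ∧
      (∀ t ∈ Icc u v, H (t, 0) = toFun t) ∧
      (∀ t ∈ Icc u v, H (t, 1) = toFun u) ∧
      (∀ s ∈ Icc (0:ℝ) 1, H (u, s) = toFun u ∧ H (v, s) = toFun v) ∧
      (∀ p ∈ Icc u v ×ˢ Icc (0:ℝ) 1, H p ∈ toFun '' Icc u v)

namespace RPath

variable {X : Type*} [MetricSpace X]

/-- `c` starts at the point `p`. -/
def StartsAt (c : RPath X) (p : X) : Prop := c.toFun 0 = p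

/-- `c` ends at the point `p`. -/
def EndsAt (c : RPath X) (p : X) : Prop := c.toFun c.len = p

/-- The length `L(c₁ ∧ c₂)` of the longest common initial segment of two paths. -/
noncomputable def wedgeLen (c₁ c₂ : RPath X) : ℝ :=
  sSup {b : ℝ | 0 ≤ b ∧ b ≤ c₁.len ∧ b ≤ c₂.len ∧ ∀ t ∈ Icc 0 b, c₁.toFun t = c₂.toFun t}

/-- The distance `d(c₁,c₂) = L(c₁) + L(c₂) - 2 L(c₁ ∧ c₂)`. -/
noncomputable def rhoDist (c₁ c₂ : RPath X) : ℝ :=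
  c₁.len + c₂.len - 2 * wedgeLen c₁ c₂

end RPath

/-- A length space: a metric space with at least two points in which any two points
are joined by paths of length arbitrarily close to the distance between them. -/
def IsLengthSpace (X : Type*) [MetricSpace X] : Prop :=
  (∃ x y : X, x ≠ y) ∧
  ∀ x y : X, ∀ ε : ℝ, 0 < ε → ∃ (c : ℝ → X) (b : ℝ), 0 ≤ b ∧
    ContinuousOn c (Icc 0 b) ∧ c 0 = x ∧ c b = y ∧
    eVariationOn c (Icc 0 b) < ENNReal.ofReal (dist x y + ε)

namespace RPath

variable {X : Type*} [MetricSpace X]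

/-- The amount of cancellation between a path `k` and a following path `c`: the
length of the maximal final segment of `k` that coincides, with reversed
orientation, with an initial segment of `c`. -/
noncomputable def cancelAmt (k c : RPath X) : ℝ :=
  sSup {s : ℝ | 0 ≤ s ∧ s ≤ k.len ∧ s ≤ c.len ∧
    ∀ t ∈ Set.Icc 0 s, k.toFun (k.len - t) = c.toFun t}

/-- `m` is the cancelled concatenation `k ⋆ c`: it is obtained from the concatenation
`k ∗ c` by removing the maximal final segment of `k` coinciding with an initial
segment of `c` with reversed orientation, together with that initial segment of
`c`. -/
def IsCancelConcat (k c m : RPath X) : Prop :=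
  m.len = k.len + c.len - 2 * cancelAmt k c ∧
  (∀ t ∈ Set.Icc 0 (k.len - cancelAmt k c), m.toFun t = k.toFun t) ∧
  (∀ t ∈ Set.Icc (k.len - cancelAmt k c) m.len,
    m.toFun t = c.toFun (t - (k.len - cancelAmt k c) + cancelAmt k c))

/-- `r` is the reverse `c⁻¹` of the path `c`. -/
def IsReverse (c r : RPath X) : Prop :=
  r.len = c.len ∧ ∀ t ∈ Set.Icc 0 c.len, r.toFun t = c.toFun (c.len - t)

end RPath

/-!
A ρ-path never backtracks: if `c (p - u) = c (p + u)` for all small `u ≥ 0` at an interior point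
`p`, folding the path at `p` null-homotopes a nontrivial subsegment inside its own image, which
weak normality forbids. The rest is bookkeeping of cancellation amounts, which are attained
suprema. With `A = cancelAmt k c`, the path `k ⋆ c` follows `k` up to `L(k) - A` and then `c` from
`A` on. Hence `L((k ⋆ c₁) ∧ (k ⋆ c₂)) = L(k) - A₁ - A₂ + L(c₁ ∧ c₂)`, which is the isometry, and
`k ⋆ c = c` would make `k` backtrack at its midpoint. For associativity one compares the
cancellation amounts of `(k₁ ⋆ k₂) ⋆ c` and `k₁ ⋆ (k₂ ⋆ c)` according to whether the parts of `k₂`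
cancelled against `k₁` and against `c` are disjoint, adjacent or overlapping; in the overlapping
case any further cancellation would make `c` or `k₁` backtrack.
-/

section AgreeSet

variable {α : Type*}

-- `cancelAmt` and `wedgeLen` are by definition suprema of such sets.
def agreeSet (f g : ℝ → α) (a b : ℝ) : Set ℝ :=
  {s | 0 ≤ s ∧ s ≤ a ∧ s ≤ b ∧ ∀ t ∈ Icc 0 s, f t = g t}

lemma le_csSup_agreeSet {f g : ℝ → α} {a b s : ℝ} (hs : s ∈ agreeSet f g a b) :
    s ≤ sSup (agreeSet f g a b) :=
  le_csSup ⟨a, fun _ hx => hx.2.1⟩ hs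

lemma csSup_agreeSet_mem [TopologicalSpace α] [T2Space α] {f g : ℝ → α}
    (hf : Continuous f) (hg : Continuous g) {a b : ℝ} (ha : 0 ≤ a) (hb : 0 ≤ b)
    (h0 : f 0 = g 0) : sSup (agreeSet f g a b) ∈ agreeSet f g a b := by
  set S := agreeSet f g a b
  have h0S : (0 : ℝ) ∈ S := ⟨le_rfl, ha, hb, fun t ht => by rwa [le_antisymm ht.2 ht.1]⟩
  have hne : S.Nonempty := ⟨0, h0S⟩
  have hbdd : BddAbove S := ⟨a, fun _ hs => hs.2.1⟩
  refine ⟨le_csSup hbdd h0S, csSup_le hne fun _ hs => hs.2.1, csSup_le hne fun _ hs => hs.2.2.1,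
    fun t ht => ?_⟩
  rcases ht.2.lt_or_eq with hlt | rfl
  · obtain ⟨s, hs, hts⟩ := exists_lt_of_lt_csSup hne hlt
    exact hs.2.2.2 t ⟨ht.1, hts.le⟩
  · have hSE : S ⊆ {t | f t = g t} := fun s hs => hs.2.2.2 s ⟨hs.1, le_rfl⟩
    exact closure_minimal hSE (isClosed_eq hf hg) (csSup_mem_closure hne hbdd)

end AgreeSet

lemma forall_mem_Icc_add {P : ℝ → Prop} {x y : ℝ} (h₁ : ∀ t ∈ Icc 0 x, P t)
    (h₂ : ∀ u ∈ Icc 0 y, P (x + u)) : ∀ t ∈ Icc 0 (x + y), P t := by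
  intro t ht
  rcases le_total t x with htx | htx
  · exact h₁ t ⟨ht.1, htx⟩
  · simpa using h₂ (t - x) ⟨by linarith, by linarith [ht.2]⟩

namespace RPath

variable {X : Type*} [MetricSpace X]

lemma toFun_clamp (c : RPath X) (t : ℝ) : c.toFun (max 0 (min c.len t)) = c.toFun t := by
  rcases le_total t 0 with h0 | h0
  · rw [max_eq_left ((min_le_right _ _).trans h0), c.clamp_left t h0]
  rcases le_total c.len t with h1 | h1
  · rw [min_eq_left h1, max_eq_right c.len_nonneg, c.clamp_right t h1]
  · rw [min_eq_right h1, max_eq_right h0]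

lemma clamp_mem_Icc (c : RPath X) (t : ℝ) : max 0 (min c.len t) ∈ Icc 0 c.len :=
  ⟨le_max_left _ _, max_le c.len_nonneg (min_le_left _ _)⟩

lemma continuous_toFun (c : RPath X) : Continuous c.toFun :=
  (c.contOn.comp_continuous (by fun_prop) c.clamp_mem_Icc).congr c.toFun_clamp

lemma ext_of_eqOn {c₁ c₂ : RPath X} (hlen : c₁.len = c₂.len)
    (h : ∀ t ∈ Icc 0 c₁.len, c₁.toFun t = c₂.toFun t) : c₁ = c₂ := by
  have hf : c₁.toFun = c₂.toFun := funext fun t => by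
    rw [← c₁.toFun_clamp, ← c₂.toFun_clamp, ← hlen]
    exact h _ (c₁.clamp_mem_Icc t)
  cases c₁; cases c₂
  simp only [mk.injEq] at *
  exact ⟨hlen, hf⟩

lemma EndsAt.toFun_len_eq {k c : RPath X} {x : X} (hk : k.EndsAt x) (hc : c.StartsAt x) :
    k.toFun k.len = c.toFun 0 :=
  Eq.trans hk (Eq.symm hc)

-- Folding `[p - δ, p + δ]` at `p` onto `p - δ` null-homotopes that segment within its image.
lemma not_backtrack_of_le (c : RPath X) {p δ : ℝ} (hδ : 0 < δ) (hδp : δ ≤ p)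
    (hpδ : p + δ ≤ c.len) (h : ∀ u ∈ Icc 0 δ, c.toFun (p - u) = c.toFun (p + u)) : False := by
  have hdist : ∀ t ∈ Icc (p - δ) (p + δ), |t - p| ≤ δ :=
    fun t ht => abs_le.2 ⟨by linarith [ht.1], by linarith [ht.2]⟩
  have hfold : ∀ t ∈ Icc (p - δ) (p + δ), c.toFun (p - |t - p|) = c.toFun t := by
    intro t ht
    rcases le_total t p with htp | htp
    · rw [abs_of_nonpos (by linarith)]; ring_nf
    · rw [h _ ⟨abs_nonneg _, hdist t ht⟩, abs_of_nonneg (by linarith)]; ring_nf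
  have hends : c.toFun (p - δ) = c.toFun (p + δ) := h δ ⟨hδ.le, le_rfl⟩
  have hlow : ∀ q ∈ Icc (p - δ) (p + δ) ×ˢ Icc (0 : ℝ) 1,
      p - δ ≤ min (p - |q.1 - p|) (p - q.2 * δ) :=
    fun q hq => le_min (by linarith [hdist q.1 hq.1]) (by nlinarith [hq.2.2])
  refine c.weaklyNormal ⟨p - δ, p + δ, by linarith, by linarith, hpδ, hends,
    fun q => c.toFun (min (p - |q.1 - p|) (p - q.2 * δ)),
    (c.continuous_toFun.comp (by fun_prop)).continuousOn, fun t ht => ?_, fun t ht => ?_,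
    fun s hs => ⟨?_, ?_⟩, fun q hq => ⟨_, ⟨hlow q hq, ?_⟩, rfl⟩⟩
  · dsimp only
    rw [zero_mul, sub_zero, min_eq_left (by linarith [abs_nonneg (t - p)]), hfold t ht]
  · dsimp only
    rw [one_mul, min_eq_right (by linarith [hdist t ht])]
  · dsimp only
    rw [sub_sub_cancel_left, abs_neg, abs_of_pos hδ, min_eq_left (by nlinarith [hs.2])]
  · dsimp only
    rw [add_sub_cancel_left, abs_of_pos hδ, min_eq_left (by nlinarith [hs.2]), hends]
  · linarith [min_le_right (p - |q.1 - p|) (p - q.2 * δ), hq.2.1, mul_nonneg hq.2.1 hδ.le]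

lemma not_backtrack (c : RPath X) {p ε : ℝ} (hp₀ : 0 < p) (hp : p < c.len) (hε : 0 < ε)
    (h : ∀ u ∈ Icc 0 ε, c.toFun (p - u) = c.toFun (p + u)) : False := by
  have hδε : min ε (min p (c.len - p)) ≤ ε := min_le_left _ _
  have hδp : min ε (min p (c.len - p)) ≤ p := (min_le_right _ _).trans (min_le_left _ _)
  have hδl : min ε (min p (c.len - p)) ≤ c.len - p := (min_le_right _ _).trans (min_le_right _ _)
  exact c.not_backtrack_of_le (lt_min hε (lt_min hp₀ (by linarith))) hδp (by linarith)
    fun u hu => h u ⟨hu.1, hu.2.trans hδε⟩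

lemma cancelAmt_spec {k c : RPath X} (he : k.toFun k.len = c.toFun 0) :
    0 ≤ cancelAmt k c ∧ cancelAmt k c ≤ k.len ∧ cancelAmt k c ≤ c.len ∧
      ∀ t ∈ Icc 0 (cancelAmt k c), k.toFun (k.len - t) = c.toFun t :=
  csSup_agreeSet_mem (k.continuous_toFun.comp (by fun_prop)) c.continuous_toFun
    k.len_nonneg c.len_nonneg (by simpa using he)

lemma le_cancelAmt {k c : RPath X} {s : ℝ} (h0 : 0 ≤ s) (hk : s ≤ k.len) (hc : s ≤ c.len)
    (h : ∀ t ∈ Icc 0 s, k.toFun (k.len - t) = c.toFun t) : s ≤ cancelAmt k c :=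
  le_csSup_agreeSet ⟨h0, hk, hc, h⟩

lemma wedgeLen_spec {c₁ c₂ : RPath X} (h : c₁.toFun 0 = c₂.toFun 0) :
    0 ≤ wedgeLen c₁ c₂ ∧ wedgeLen c₁ c₂ ≤ c₁.len ∧ wedgeLen c₁ c₂ ≤ c₂.len ∧
      ∀ t ∈ Icc 0 (wedgeLen c₁ c₂), c₁.toFun t = c₂.toFun t :=
  csSup_agreeSet_mem c₁.continuous_toFun c₂.continuous_toFun c₁.len_nonneg c₂.len_nonneg h

lemma le_wedgeLen {c₁ c₂ : RPath X} {s : ℝ} (h0 : 0 ≤ s) (h₁ : s ≤ c₁.len) (h₂ : s ≤ c₂.len)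
    (h : ∀ t ∈ Icc 0 s, c₁.toFun t = c₂.toFun t) : s ≤ wedgeLen c₁ c₂ :=
  le_csSup_agreeSet ⟨h0, h₁, h₂, h⟩

lemma wedgeLen_comm (c₁ c₂ : RPath X) : wedgeLen c₁ c₂ = wedgeLen c₂ c₁ := by
  unfold wedgeLen
  congr 1
  ext s
  constructor <;> rintro ⟨h0, h₁, h₂, h⟩ <;> exact ⟨h0, h₂, h₁, fun t ht => (h t ht).symm⟩

lemma rhoDist_comm (c₁ c₂ : RPath X) : rhoDist c₁ c₂ = rhoDist c₂ c₁ := by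
  rw [rhoDist, rhoDist, wedgeLen_comm, add_comm c₁.len]

lemma min_cancelAmt_le_of_eqOn_right {k c c' : RPath X} {s : ℝ} (hs : 0 ≤ s)
    (hsc' : s ≤ c'.len) (he : k.toFun k.len = c.toFun 0)
    (h : ∀ t ∈ Icc 0 s, c.toFun t = c'.toFun t) : min (cancelAmt k c) s ≤ cancelAmt k c' := by
  obtain ⟨h0, hk, -, hag⟩ := cancelAmt_spec he
  exact le_cancelAmt (le_min h0 hs) ((min_le_left _ _).trans hk) ((min_le_right _ _).trans hsc')
    fun t ht => (hag t ⟨ht.1, ht.2.trans (min_le_left _ _)⟩).trans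
      (h t ⟨ht.1, ht.2.trans (min_le_right _ _)⟩)

lemma min_cancelAmt_le_of_eqOn_left {k k' c : RPath X} {s : ℝ} (hs : 0 ≤ s)
    (hsk' : s ≤ k'.len) (he : k.toFun k.len = c.toFun 0)
    (h : ∀ t ∈ Icc 0 s, k.toFun (k.len - t) = k'.toFun (k'.len - t)) :
    min (cancelAmt k c) s ≤ cancelAmt k' c := by
  obtain ⟨h0, -, hc, hag⟩ := cancelAmt_spec he
  exact le_cancelAmt (le_min h0 hs) ((min_le_right _ _).trans hsk') ((min_le_left _ _).trans hc)
    fun t ht => (h t ⟨ht.1, ht.2.trans (min_le_right _ _)⟩).symm.trans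
      (hag t ⟨ht.1, ht.2.trans (min_le_left _ _)⟩)

namespace IsCancelConcat

variable {k c m : RPath X}

lemma apply_of_le (hm : IsCancelConcat k c m) {t : ℝ}
    (ht : t ∈ Icc 0 (k.len - cancelAmt k c)) : m.toFun t = k.toFun t :=
  hm.2.1 t ht

lemma apply_add (hm : IsCancelConcat k c m) {u : ℝ} (hu : u ∈ Icc 0 (c.len - cancelAmt k c)) :
    m.toFun (k.len - cancelAmt k c + u) = c.toFun (cancelAmt k c + u) := by
  rw [hm.2.2 _ ⟨by linarith [hu.1], by linarith [hm.1, hu.2]⟩]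
  ring_nf

lemma apply_len_sub (hm : IsCancelConcat k c m) {t : ℝ}
    (ht : t ∈ Icc 0 (c.len - cancelAmt k c)) : m.toFun (m.len - t) = c.toFun (c.len - t) := by
  have h := hm.apply_add (u := c.len - cancelAmt k c - t) ⟨by linarith [ht.2], by linarith [ht.1]⟩
  rw [hm.1]
  convert h using 2 <;> ring

lemma apply_zero (hm : IsCancelConcat k c m) (he : k.toFun k.len = c.toFun 0) :
    m.toFun 0 = k.toFun 0 :=
  hm.apply_of_le ⟨le_rfl, sub_nonneg.2 (cancelAmt_spec he).2.1⟩

lemma apply_len (hm : IsCancelConcat k c m) (he : k.toFun k.len = c.toFun 0) :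
    m.toFun m.len = c.toFun c.len := by
  simpa using hm.apply_len_sub ⟨le_rfl, sub_nonneg.2 (cancelAmt_spec he).2.2.1⟩

lemma of_apply_add (hlen : m.len = k.len + c.len - 2 * cancelAmt k c)
    (h₁ : ∀ t ∈ Icc 0 (k.len - cancelAmt k c), m.toFun t = k.toFun t)
    (h₂ : ∀ u ∈ Icc 0 (c.len - cancelAmt k c),
      m.toFun (k.len - cancelAmt k c + u) = c.toFun (cancelAmt k c + u)) :
    IsCancelConcat k c m := by
  refine ⟨hlen, h₁, fun t ht => ?_⟩
  have h := h₂ (t - (k.len - cancelAmt k c)) ⟨by linarith [ht.1], by linarith [ht.2]⟩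
  rw [add_sub_cancel, add_comm] at h
  exact h

lemma unique {m' : RPath X} (hm : IsCancelConcat k c m) (hm' : IsCancelConcat k c m') :
    m = m' := by
  have hlen : m.len = (k.len - cancelAmt k c) + (c.len - cancelAmt k c) := by rw [hm.1]; ring
  refine ext_of_eqOn (hlen.trans (by rw [hm'.1]; ring)) (hlen ▸ forall_mem_Icc_add
    (fun t ht => (hm.apply_of_le ht).trans (hm'.apply_of_le ht).symm)
    (fun u hu => (hm.apply_add hu).trans (hm'.apply_add hu).symm))

lemma eq_of_len_eq_zero (hm : IsCancelConcat k c m) (he : k.toFun k.len = c.toFun 0)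
    (hk : k.len = 0) : m = c := by
  obtain ⟨hA₀, hAk, -, -⟩ := cancelAmt_spec he
  have hA : cancelAmt k c = 0 := le_antisymm (hk ▸ hAk) hA₀
  refine ext_of_eqOn (by rw [hm.1, hA, hk]; ring) fun t ht => ?_
  simpa [hk, hA] using hm.apply_add (u := t) ⟨ht.1, by rw [hA, sub_zero]; linarith [ht.2, hm.1]⟩

-- If `k ⋆ c = c` then `L(k) = 2A` and `k` backtracks at its midpoint `A`.
lemma len_eq_zero (hm : IsCancelConcat k c c) (he : k.toFun k.len = c.toFun 0) : k.len = 0 := by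
  obtain ⟨hA₀, -, -, hag⟩ := cancelAmt_spec he
  set A := cancelAmt k c
  have hK : k.len = 2 * A := by linarith [hm.1]
  by_contra hK₀
  have hA : 0 < A := lt_of_le_of_ne hA₀ fun h => hK₀ (by rw [hK, ← h, mul_zero])
  refine k.not_backtrack hA (by linarith) hA fun u hu => ?_
  calc k.toFun (A - u) = c.toFun (A - u) :=
        (hm.apply_of_le ⟨by linarith [hu.2], by linarith [hu.1]⟩).symm
    _ = k.toFun (k.len - (A - u)) := (hag _ ⟨by linarith [hu.2], by linarith [hu.1]⟩).symm
    _ = k.toFun (A + u) := by rw [hK]; ring_nf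

end IsCancelConcat

section Isometry

variable {k c₁ c₂ m₁ m₂ : RPath X}

lemma wedgeLen_eq_cancelAmt_of_lt (he₁ : k.toFun k.len = c₁.toFun 0)
    (he₂ : k.toFun k.len = c₂.toFun 0) (hA : cancelAmt k c₁ < cancelAmt k c₂) :
    wedgeLen c₁ c₂ = cancelAmt k c₁ := by
  obtain ⟨hA₀, -, hA₁c, hag₁⟩ := cancelAmt_spec he₁
  obtain ⟨-, -, hA₂c, hag₂⟩ := cancelAmt_spec he₂
  obtain ⟨hW₀, hWc₁, -, hW⟩ := wedgeLen_spec (he₁.symm.trans he₂)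
  refine le_antisymm (not_lt.1 fun hlt => ?_) (le_wedgeLen hA₀ hA₁c (hA.le.trans hA₂c)
    fun t ht => (hag₁ t ht).symm.trans (hag₂ t ⟨ht.1, ht.2.trans hA.le⟩))
  exact absurd (min_cancelAmt_le_of_eqOn_right hW₀ hWc₁ he₂ fun t ht => (hW t ht).symm)
    (not_le.2 (lt_min hA hlt))

namespace IsCancelConcat

lemma wedgeLen_eq_of_cancelAmt_eq (h₁ : IsCancelConcat k c₁ m₁) (h₂ : IsCancelConcat k c₂ m₂)
    (he₁ : k.toFun k.len = c₁.toFun 0) (he₂ : k.toFun k.len = c₂.toFun 0)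
    (hA : cancelAmt k c₁ = cancelAmt k c₂) :
    wedgeLen m₁ m₂ = k.len - 2 * cancelAmt k c₁ + wedgeLen c₁ c₂ := by
  obtain ⟨hA₀, hAk, hAc₁, hag₁⟩ := cancelAmt_spec he₁
  obtain ⟨-, -, hAc₂, hag₂⟩ := cancelAmt_spec he₂
  obtain ⟨-, hWc₁, hWc₂, hW⟩ := wedgeLen_spec (he₁.symm.trans he₂)
  obtain ⟨-, hVm₁, hVm₂, hV⟩ := wedgeLen_spec ((h₁.apply_zero he₁).trans (h₂.apply_zero he₂).symm)
  have hlen₁ := h₁.1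
  have hlen₂ := h₂.1
  set A := cancelAmt k c₁
  rw [← hA] at hAc₂ hag₂ hlen₂
  have hm₂ : ∀ t ∈ Icc 0 (k.len - A), m₂.toFun t = k.toFun t := hA ▸ fun t ht => h₂.apply_of_le ht
  have hc₂ : ∀ u ∈ Icc 0 (c₂.len - A), m₂.toFun (k.len - A + u) = c₂.toFun (A + u) :=
    hA ▸ fun u hu => h₂.apply_add hu
  have hag : ∀ t ∈ Icc 0 A, c₁.toFun t = c₂.toFun t :=
    fun t ht => (hag₁ t ht).symm.trans (hag₂ t ht)
  have hAW : A ≤ wedgeLen c₁ c₂ := le_wedgeLen hA₀ hAc₁ hAc₂ hag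
  have hge : (k.len - A) + (wedgeLen c₁ c₂ - A) ≤ wedgeLen m₁ m₂ :=
    le_wedgeLen (by linarith) (by linarith) (by linarith) <| forall_mem_Icc_add
      (fun t ht => (h₁.apply_of_le ht).trans (hm₂ t ht).symm) fun u hu =>
        (h₁.apply_add ⟨hu.1, by linarith [hu.2]⟩).trans <|
          (hW _ ⟨by linarith [hu.1], by linarith [hu.2]⟩).trans
            (hc₂ u ⟨hu.1, by linarith [hu.2]⟩).symm
  have hle : A + (wedgeLen m₁ m₂ - (k.len - A)) ≤ wedgeLen c₁ c₂ :=
    le_wedgeLen (by linarith) (by linarith) (by linarith) <| forall_mem_Icc_add hag fun u hu =>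
      (h₁.apply_add ⟨hu.1, by linarith [hu.2]⟩).symm.trans <|
        (hV _ ⟨by linarith [hu.1], by linarith [hu.2]⟩).trans (hc₂ u ⟨hu.1, by linarith [hu.2]⟩)
  linarith

lemma wedgeLen_eq_of_cancelAmt_lt (h₁ : IsCancelConcat k c₁ m₁) (h₂ : IsCancelConcat k c₂ m₂)
    (he₁ : k.toFun k.len = c₁.toFun 0) (he₂ : k.toFun k.len = c₂.toFun 0)
    (hA : cancelAmt k c₁ < cancelAmt k c₂) : wedgeLen m₁ m₂ = k.len - cancelAmt k c₂ := by
  obtain ⟨hA₁₀, -, hA₁c, -⟩ := cancelAmt_spec he₁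
  obtain ⟨-, hA₂k, hA₂c, hag₂⟩ := cancelAmt_spec he₂
  obtain ⟨-, -, hVm₂, hV⟩ := wedgeLen_spec ((h₁.apply_zero he₁).trans (h₂.apply_zero he₂).symm)
  have hlen₁ := h₁.1
  have hlen₂ := h₂.1
  set A₁ := cancelAmt k c₁
  set A₂ := cancelAmt k c₂
  set V := wedgeLen m₁ m₂
  refine le_antisymm (not_lt.1 fun hlt => ?_) (le_wedgeLen (by linarith) (by linarith)
    (by linarith) fun t ht => (h₁.apply_of_le ⟨ht.1, by linarith [ht.2]⟩).trans
      (h₂.apply_of_le ht).symm)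
  -- otherwise `c₂` would backtrack at `A₂`
  have hA₂L : A₂ < c₂.len := lt_of_le_of_ne hA₂c fun h => by rw [← h] at hlen₂; linarith
  refine c₂.not_backtrack (by linarith) hA₂L (ε := min (V - (k.len - A₂)) (A₂ - A₁))
    (lt_min (by linarith) (by linarith)) fun u hu => ?_
  have hu₁ := hu.2.trans (min_le_left _ _)
  have hu₂ := hu.2.trans (min_le_right _ _)
  calc c₂.toFun (A₂ - u) = k.toFun (k.len - (A₂ - u)) :=
        (hag₂ _ ⟨by linarith, by linarith [hu.1]⟩).symm
    _ = m₁.toFun (k.len - A₂ + u) := by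
        rw [h₁.apply_of_le ⟨by linarith [hu.1], by linarith⟩]; congr 1; ring
    _ = m₂.toFun (k.len - A₂ + u) := hV _ ⟨by linarith [hu.1], by linarith⟩
    _ = c₂.toFun (A₂ + u) := h₂.apply_add ⟨hu.1, by linarith⟩

lemma rhoDist_eq (h₁ : IsCancelConcat k c₁ m₁) (h₂ : IsCancelConcat k c₂ m₂)
    (he₁ : k.toFun k.len = c₁.toFun 0) (he₂ : k.toFun k.len = c₂.toFun 0) :
    rhoDist m₁ m₂ = rhoDist c₁ c₂ := by
  wlog hA : cancelAmt k c₁ ≤ cancelAmt k c₂ generalizing c₁ c₂ m₁ m₂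
  · rw [rhoDist_comm, this h₂ h₁ he₂ he₁ (le_of_not_ge hA), rhoDist_comm]
  rw [rhoDist, rhoDist, h₁.1, h₂.1]
  rcases hA.eq_or_lt with hA | hA
  · rw [h₁.wedgeLen_eq_of_cancelAmt_eq h₂ he₁ he₂ hA, ← hA]; ring
  · rw [h₁.wedgeLen_eq_of_cancelAmt_lt h₂ he₁ he₂ hA, wedgeLen_eq_cancelAmt_of_lt he₁ he₂ hA]; ring

end IsCancelConcat

end Isometry

namespace IsCancelConcat

variable {k₁ k₂ c p m q : RPath X}

lemma min_cancelAmt_left (hm : IsCancelConcat k₂ c m) (he₁ : k₁.toFun k₁.len = k₂.toFun 0)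
    (he₂ : k₂.toFun k₂.len = c.toFun 0) :
    min (cancelAmt k₁ m) (k₂.len - cancelAmt k₂ c) =
      min (cancelAmt k₁ k₂) (k₂.len - cancelAmt k₂ c) := by
  obtain ⟨hB₀, hBk, hBc, -⟩ := cancelAmt_spec he₂
  have hs : 0 ≤ k₂.len - cancelAmt k₂ c := by linarith
  have he : k₁.toFun k₁.len = m.toFun 0 := he₁.trans (hm.apply_zero he₂).symm
  exact le_antisymm
    (le_min (min_cancelAmt_le_of_eqOn_right hs (by linarith) he fun t ht => hm.apply_of_le ht)
      (min_le_right _ _))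
    (le_min (min_cancelAmt_le_of_eqOn_right hs (by linarith [hm.1]) he₁
      fun t ht => (hm.apply_of_le ht).symm) (min_le_right _ _))

lemma min_cancelAmt_right (hp : IsCancelConcat k₁ k₂ p) (he₁ : k₁.toFun k₁.len = k₂.toFun 0)
    (he₂ : k₂.toFun k₂.len = c.toFun 0) :
    min (cancelAmt p c) (k₂.len - cancelAmt k₁ k₂) =
      min (cancelAmt k₂ c) (k₂.len - cancelAmt k₁ k₂) := by
  obtain ⟨hA₀, hAk₁, hAk₂, -⟩ := cancelAmt_spec he₁
  have hs : 0 ≤ k₂.len - cancelAmt k₁ k₂ := by linarith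
  have he : p.toFun p.len = c.toFun 0 := (hp.apply_len he₁).trans he₂
  exact le_antisymm
    (le_min (min_cancelAmt_le_of_eqOn_left hs (by linarith) he fun t ht => hp.apply_len_sub ht)
      (min_le_right _ _))
    (le_min (min_cancelAmt_le_of_eqOn_left hs (by linarith [hp.1]) he₂
      fun t ht => (hp.apply_len_sub ht).symm) (min_le_right _ _))

lemma assoc_of_add_lt (hp : IsCancelConcat k₁ k₂ p) (hm : IsCancelConcat k₂ c m)
    (hq : IsCancelConcat p c q) (he₁ : k₁.toFun k₁.len = k₂.toFun 0)
    (he₂ : k₂.toFun k₂.len = c.toFun 0) (h : cancelAmt k₁ k₂ + cancelAmt k₂ c < k₂.len) :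
    IsCancelConcat k₁ m q := by
  obtain ⟨hA₀, hAk₁, -, -⟩ := cancelAmt_spec he₁
  obtain ⟨hB₀, -, -, -⟩ := cancelAmt_spec he₂
  have hC := hm.min_cancelAmt_left he₁ he₂
  have hD := hp.min_cancelAmt_right he₁ he₂
  have hlp := hp.1
  have hlm := hm.1
  set A := cancelAmt k₁ k₂
  set B := cancelAmt k₂ c
  rw [min_eq_left (by linarith : A ≤ k₂.len - B)] at hC
  rw [min_eq_left (by linarith : B ≤ k₂.len - A)] at hD
  replace hC : cancelAmt k₁ m = A :=
    ((min_eq_iff.1 hC).resolve_right fun h' => by linarith [h'.1]).1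
  replace hD : cancelAmt p c = B :=
    ((min_eq_iff.1 hD).resolve_right fun h' => by linarith [h'.1]).1
  have hq₁ : ∀ t ∈ Icc 0 (p.len - B), q.toFun t = p.toFun t := hD ▸ fun t ht => hq.apply_of_le ht
  have hq₂ : ∀ u ∈ Icc 0 (c.len - B), q.toFun (p.len - B + u) = c.toFun (B + u) :=
    hD ▸ fun u hu => hq.apply_add hu
  refine of_apply_add (by rw [hq.1, hC, hD]; linarith) (fun t ht => ?_) ?_
  · rw [hC] at ht
    exact (hq₁ t ⟨ht.1, by linarith [ht.2]⟩).trans (hp.apply_of_le ht)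
  rw [hC, show m.len - A = (k₂.len - B - A) + (c.len - B) by linarith]
  refine forall_mem_Icc_add (fun u hu => ?_) fun v hv => ?_
  · calc q.toFun (k₁.len - A + u) = p.toFun (k₁.len - A + u) :=
          hq₁ _ ⟨by linarith [hu.1], by linarith [hu.2]⟩
      _ = k₂.toFun (A + u) := hp.apply_add ⟨hu.1, by linarith [hu.2]⟩
      _ = m.toFun (A + u) := (hm.apply_of_le ⟨by linarith [hu.1], by linarith [hu.2]⟩).symm
  · calc q.toFun (k₁.len - A + (k₂.len - B - A + v)) = q.toFun (p.len - B + v) := by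
          congr 1; linarith
      _ = c.toFun (B + v) := hq₂ v hv
      _ = m.toFun (k₂.len - B + v) := (hm.apply_add hv).symm
      _ = m.toFun (A + (k₂.len - B - A + v)) := by congr 1; ring

-- When the two cancellations exhaust `k₂`, what is left of `k₁` may cancel further against `c`.
lemma cancelAmt_sub_eq_of_add_eq (hp : IsCancelConcat k₁ k₂ p) (hm : IsCancelConcat k₂ c m)
    (he₁ : k₁.toFun k₁.len = k₂.toFun 0) (he₂ : k₂.toFun k₂.len = c.toFun 0)
    (h : cancelAmt k₁ k₂ + cancelAmt k₂ c = k₂.len) :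
    cancelAmt p c - cancelAmt k₂ c = cancelAmt k₁ m - cancelAmt k₁ k₂ := by
  obtain ⟨hA₀, -, -, hagA⟩ := cancelAmt_spec he₁
  obtain ⟨hB₀, -, -, hagB⟩ := cancelAmt_spec he₂
  obtain ⟨-, hCk₁, hCm, hagC⟩ := cancelAmt_spec (he₁.trans (hm.apply_zero he₂).symm)
  obtain ⟨-, hDp, hDc, hagD⟩ := cancelAmt_spec ((hp.apply_len he₁).trans he₂)
  have hC := hm.min_cancelAmt_left he₁ he₂
  have hD := hp.min_cancelAmt_right he₁ he₂
  have hlp := hp.1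
  have hlm := hm.1
  set A := cancelAmt k₁ k₂
  set B := cancelAmt k₂ c
  set C := cancelAmt k₁ m
  set D := cancelAmt p c
  rw [show k₂.len - B = A by linarith, min_self, min_eq_right_iff] at hC
  rw [show k₂.len - A = B by linarith, min_self, min_eq_right_iff] at hD
  have hBD : B + (C - A) ≤ D := le_cancelAmt (by linarith) (by linarith) (by linarith) <|
    forall_mem_Icc_add (fun t ht => (hp.apply_len_sub ⟨ht.1, by linarith [ht.2]⟩).trans (hagB t ht))
      fun u hu => calc
        p.toFun (p.len - (B + u)) = k₁.toFun (k₁.len - (A + u)) := by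
          rw [hp.apply_of_le ⟨by linarith [hu.2], by linarith [hu.1]⟩]; congr 1; linarith
        _ = m.toFun (A + u) := hagC _ ⟨by linarith [hu.1], by linarith [hu.2]⟩
        _ = c.toFun (B + u) := by
          rw [← hm.apply_add ⟨hu.1, by linarith [hu.2]⟩]; congr 1; linarith
  have hAC : A + (D - B) ≤ C := le_cancelAmt (by linarith) (by linarith) (by linarith) <|
    forall_mem_Icc_add
      (fun t ht => (hagA t ht).trans (hm.apply_of_le ⟨ht.1, by linarith [ht.2]⟩).symm)
      fun u hu => calc
        k₁.toFun (k₁.len - (A + u)) = p.toFun (p.len - (B + u)) := by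
          rw [hp.apply_of_le ⟨by linarith [hu.2], by linarith [hu.1]⟩]; congr 1; linarith
        _ = c.toFun (B + u) := hagD _ ⟨by linarith [hu.1], by linarith [hu.2]⟩
        _ = m.toFun (A + u) := by
          rw [← hm.apply_add ⟨hu.1, by linarith [hu.2]⟩]; congr 1; linarith
  linarith

lemma assoc_of_add_eq (hp : IsCancelConcat k₁ k₂ p) (hm : IsCancelConcat k₂ c m)
    (hq : IsCancelConcat p c q) (he₁ : k₁.toFun k₁.len = k₂.toFun 0)
    (he₂ : k₂.toFun k₂.len = c.toFun 0) (h : cancelAmt k₁ k₂ + cancelAmt k₂ c = k₂.len) :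
    IsCancelConcat k₁ m q := by
  have hCD := cancelAmt_sub_eq_of_add_eq hp hm he₁ he₂ h
  have hAC := hm.min_cancelAmt_left he₁ he₂
  have hlp := hp.1
  have hlm := hm.1
  set A := cancelAmt k₁ k₂
  set B := cancelAmt k₂ c
  set C := cancelAmt k₁ m
  set D := cancelAmt p c
  rw [show k₂.len - B = A by linarith, min_self, min_eq_right_iff] at hAC
  refine of_apply_add (by rw [hq.1]; linarith) (fun t ht => ?_) fun u hu => ?_
  · exact (hq.apply_of_le ⟨ht.1, by linarith [ht.2]⟩).trans
      (hp.apply_of_le ⟨ht.1, by linarith [ht.2]⟩)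
  calc q.toFun (k₁.len - C + u) = c.toFun (D + u) := by
        rw [← hq.apply_add ⟨hu.1, by linarith [hu.2]⟩]; congr 1; linarith
    _ = c.toFun (B + (C - A + u)) := by congr 1; linarith
    _ = m.toFun (k₂.len - B + (C - A + u)) :=
        (hm.apply_add ⟨by linarith [hu.1], by linarith [hu.2]⟩).symm
    _ = m.toFun (C + u) := by congr 1; linarith

-- Any further cancellation would make `c` backtrack at `B`.
lemma cancelAmt_left_eq_of_lt_add (hm : IsCancelConcat k₂ c m)
    (he₁ : k₁.toFun k₁.len = k₂.toFun 0) (he₂ : k₂.toFun k₂.len = c.toFun 0)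
    (h : k₂.len < cancelAmt k₁ k₂ + cancelAmt k₂ c) :
    cancelAmt k₁ m = k₂.len - cancelAmt k₂ c := by
  obtain ⟨-, -, hAk₂, hagA⟩ := cancelAmt_spec he₁
  obtain ⟨-, hBk₂, hBc, hagB⟩ := cancelAmt_spec he₂
  obtain ⟨-, -, hCm, hagC⟩ := cancelAmt_spec (he₁.trans (hm.apply_zero he₂).symm)
  have hC := hm.min_cancelAmt_left he₁ he₂
  have hlm := hm.1
  set A := cancelAmt k₁ k₂
  set B := cancelAmt k₂ c
  set C := cancelAmt k₁ m
  rw [min_eq_right (by linarith : k₂.len - B ≤ A), min_eq_right_iff] at hC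
  refine le_antisymm (not_lt.1 fun hlt => ?_) hC
  have hBL : B < c.len := lt_of_le_of_ne hBc fun hB => by rw [← hB] at hlm; linarith
  refine c.not_backtrack (by linarith) hBL (ε := min (C - (k₂.len - B)) (A + B - k₂.len))
    (lt_min (by linarith) (by linarith)) fun u hu => ?_
  have hu₁ := hu.2.trans (min_le_left _ _)
  have hu₂ := hu.2.trans (min_le_right _ _)
  calc c.toFun (B - u) = k₂.toFun (k₂.len - B + u) := by
        rw [← hagB _ ⟨by linarith, by linarith [hu.1]⟩]; congr 1; ring
    _ = k₁.toFun (k₁.len - (k₂.len - B + u)) := (hagA _ ⟨by linarith [hu.1], by linarith⟩).symm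
    _ = m.toFun (k₂.len - B + u) := hagC _ ⟨by linarith [hu.1], by linarith⟩
    _ = c.toFun (B + u) := hm.apply_add ⟨hu.1, by linarith⟩

-- Any further cancellation would make `k₁` backtrack at `L(k₁) - A`.
lemma cancelAmt_right_eq_of_lt_add (hp : IsCancelConcat k₁ k₂ p)
    (he₁ : k₁.toFun k₁.len = k₂.toFun 0) (he₂ : k₂.toFun k₂.len = c.toFun 0)
    (h : k₂.len < cancelAmt k₁ k₂ + cancelAmt k₂ c) :
    cancelAmt p c = k₂.len - cancelAmt k₁ k₂ := by
  obtain ⟨-, hAk₁, hAk₂, hagA⟩ := cancelAmt_spec he₁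
  obtain ⟨-, hBk₂, -, hagB⟩ := cancelAmt_spec he₂
  obtain ⟨-, hDp, -, hagD⟩ := cancelAmt_spec ((hp.apply_len he₁).trans he₂)
  have hD := hp.min_cancelAmt_right he₁ he₂
  have hlp := hp.1
  set A := cancelAmt k₁ k₂
  set B := cancelAmt k₂ c
  set D := cancelAmt p c
  rw [min_eq_right (by linarith : k₂.len - A ≤ B), min_eq_right_iff] at hD
  refine le_antisymm (not_lt.1 fun hlt => ?_) hD
  have hAK : A < k₁.len := lt_of_le_of_ne hAk₁ fun hA => by rw [← hA] at hlp; linarith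
  refine k₁.not_backtrack (p := k₁.len - A) (ε := min (D - (k₂.len - A)) (A + B - k₂.len))
    (by linarith) (by linarith) (lt_min (by linarith) (by linarith)) fun u hu => ?_
  have hu₁ := hu.2.trans (min_le_left _ _)
  have hu₂ := hu.2.trans (min_le_right _ _)
  calc k₁.toFun (k₁.len - A - u) = p.toFun (p.len - (k₂.len - A + u)) := by
        rw [hp.apply_of_le ⟨by linarith, by linarith [hu.1]⟩]; congr 1; linarith
    _ = c.toFun (k₂.len - A + u) := hagD _ ⟨by linarith [hu.1], by linarith⟩
    _ = k₂.toFun (A - u) := by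
        rw [← hagB _ ⟨by linarith [hu.1], by linarith⟩]; congr 1; ring
    _ = k₁.toFun (k₁.len - A + u) := by
        rw [← hagA _ ⟨by linarith, by linarith [hu.1]⟩]; congr 1; ring

lemma assoc_of_lt_add (hp : IsCancelConcat k₁ k₂ p) (hm : IsCancelConcat k₂ c m)
    (hq : IsCancelConcat p c q) (he₁ : k₁.toFun k₁.len = k₂.toFun 0)
    (he₂ : k₂.toFun k₂.len = c.toFun 0) (h : k₂.len < cancelAmt k₁ k₂ + cancelAmt k₂ c) :
    IsCancelConcat k₁ m q := by
  obtain ⟨-, -, hAk₂, hagA⟩ := cancelAmt_spec he₁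
  obtain ⟨-, hBk₂, hBc, hagB⟩ := cancelAmt_spec he₂
  have hC := hm.cancelAmt_left_eq_of_lt_add he₁ he₂ h
  have hD := hp.cancelAmt_right_eq_of_lt_add he₁ he₂ h
  have hlp := hp.1
  have hlm := hm.1
  set A := cancelAmt k₁ k₂
  set B := cancelAmt k₂ c
  have hq₁ : ∀ t ∈ Icc 0 (p.len - (k₂.len - A)), q.toFun t = p.toFun t :=
    hD ▸ fun t ht => hq.apply_of_le ht
  have hq₂ : ∀ u ∈ Icc 0 (c.len - (k₂.len - A)),
      q.toFun (p.len - (k₂.len - A) + u) = c.toFun (k₂.len - A + u) :=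
    hD ▸ fun u hu => hq.apply_add hu
  refine of_apply_add (by rw [hq.1, hC, hD]; linarith) ?_ ?_
  · rw [hC, show k₁.len - (k₂.len - B) = (k₁.len - A) + (A + B - k₂.len) by ring]
    refine forall_mem_Icc_add (fun t ht => ?_) fun u hu => ?_
    · exact (hq₁ t ⟨ht.1, by linarith [ht.2]⟩).trans (hp.apply_of_le ht)
    calc q.toFun (k₁.len - A + u) = c.toFun (k₂.len - A + u) := by
          rw [← hq₂ u ⟨hu.1, by linarith [hu.2]⟩]; congr 1; linarith
      _ = k₂.toFun (A - u) := by
          rw [← hagB _ ⟨by linarith [hu.1], by linarith [hu.2]⟩]; congr 1; ring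
      _ = k₁.toFun (k₁.len - A + u) := by
          rw [← hagA _ ⟨by linarith [hu.2], by linarith [hu.1]⟩]; congr 1; ring
  rw [hC]
  intro u hu
  calc q.toFun (k₁.len - (k₂.len - B) + u)
        = q.toFun (p.len - (k₂.len - A) + (A + B - k₂.len + u)) := by congr 1; linarith
    _ = c.toFun (k₂.len - A + (A + B - k₂.len + u)) :=
        hq₂ _ ⟨by linarith [hu.1], by linarith [hu.2]⟩
    _ = c.toFun (B + u) := by congr 1; ring
    _ = m.toFun (k₂.len - B + u) := (hm.apply_add ⟨hu.1, by linarith [hu.2]⟩).symm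

lemma assoc (hp : IsCancelConcat k₁ k₂ p) (hm : IsCancelConcat k₂ c m)
    (hq : IsCancelConcat p c q) (he₁ : k₁.toFun k₁.len = k₂.toFun 0)
    (he₂ : k₂.toFun k₂.len = c.toFun 0) : IsCancelConcat k₁ m q := by
  rcases lt_trichotomy (cancelAmt k₁ k₂ + cancelAmt k₂ c) k₂.len with h | h | h
  · exact assoc_of_add_lt hp hm hq he₁ he₂ h
  · exact assoc_of_add_eq hp hm hq he₁ he₂ h
  · exact assoc_of_lt_add hp hm hq he₁ he₂ h

end IsCancelConcat

end RPath

theorem loopGroup_acts_freely_isometrically_general {X : Type*} [MetricSpace X]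
    (base : X)
    (star : RPath X → RPath X → RPath X)
    (hstar : ∀ k c : RPath X, k.EndsAt (c.toFun 0) → RPath.IsCancelConcat k c (star k c)) :
    -- the action is by isometries
    (∀ k c₁ c₂ : RPath X, k.StartsAt base → k.EndsAt base →
      c₁.StartsAt base → c₂.StartsAt base →
      RPath.rhoDist (star k c₁) (star k c₂) = RPath.rhoDist c₁ c₂) ∧
    -- the constant loop acts as the identity
    (∀ k c : RPath X, k.StartsAt base → k.EndsAt base → c.StartsAt base →
      k.len = 0 → star k c = c) ∧
    -- the action is associative
    (∀ k₁ k₂ c : RPath X, k₁.StartsAt base → k₁.EndsAt base →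
      k₂.StartsAt base → k₂.EndsAt base → c.StartsAt base →
      star (star k₁ k₂) c = star k₁ (star k₂ c)) ∧
    -- the action is free
    (∀ k c : RPath X, k.StartsAt base → k.EndsAt base → c.StartsAt base →
      star k c = c → k.len = 0) := by
  refine ⟨fun k c₁ c₂ _ hk hc₁ hc₂ => ?_, fun k c _ hk hc hk₀ => ?_,
    fun k₁ k₂ c _ hk₁ hk₂₀ hk₂ hc => ?_, fun k c _ hk hc hkc => ?_⟩
  · have he₁ := hk.toFun_len_eq hc₁
    have he₂ := hk.toFun_len_eq hc₂
    exact (hstar k c₁ he₁).rhoDist_eq (hstar k c₂ he₂) he₁ he₂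
  · have he := hk.toFun_len_eq hc
    exact (hstar k c he).eq_of_len_eq_zero he hk₀
  · have he₁ := hk₁.toFun_len_eq hk₂₀
    have he₂ := hk₂.toFun_len_eq hc
    have hp := hstar k₁ k₂ he₁
    have hm := hstar k₂ c he₂
    have hq := hstar _ c ((hp.apply_len he₁).trans he₂)
    exact (hp.assoc hm hq he₁ he₂).unique (hstar k₁ _ (he₁.trans (hm.apply_zero he₂).symm))
  · have he := hk.toFun_len_eq hc
    have h := hstar k c he
    rw [hkc] at h
    exact h.len_eq_zero he

/-- For a length space `X`, the group `Λ(X)` of ρ-loops at the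
basepoint acts freely by isometries on the space `X̄` of ρ-paths at the basepoint via
left cancelled concatenation `k · c := k ⋆ c`:
`d(k ⋆ c₁, k ⋆ c₂) = d(c₁, c₂)`, the identity (constant) loop acts trivially, the
action is associative, and it is free. -/
theorem loopGroup_acts_freely_isometrically {X : Type*} [MetricSpace X]
    (hX : IsLengthSpace X) (base : X)
    (star : RPath X → RPath X → RPath X)
    (hstar : ∀ k c : RPath X, k.EndsAt (c.toFun 0) → RPath.IsCancelConcat k c (star k c)) :
    -- the action is by isometries
    (∀ k c₁ c₂ : RPath X, k.StartsAt base → k.EndsAt base →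
      c₁.StartsAt base → c₂.StartsAt base →
      RPath.rhoDist (star k c₁) (star k c₂) = RPath.rhoDist c₁ c₂) ∧
    -- the constant loop acts as the identity
    (∀ k c : RPath X, k.StartsAt base → k.EndsAt base → c.StartsAt base →
      k.len = 0 → star k c = c) ∧
    -- the action is associative
    (∀ k₁ k₂ c : RPath X, k₁.StartsAt base → k₁.EndsAt base →
      k₂.StartsAt base → k₂.EndsAt base → c.StartsAt base →
      star (star k₁ k₂) c = star k₁ (star k₂ c)) ∧
    -- the action is free
    (∀ k c : RPath X, k.StartsAt base → k.EndsAt base → c.StartsAt base →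
      star k c = c → k.len = 0) :=
  loopGroup_acts_freely_isometrically_general base star hstar
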